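/- Let $r \geq 3$ be odd, $q = e^{2\pi i/r}$, and let $n_r = (r-1)/2$ if $r \equiv 1 \pmod 4$ and $n_r = (r-3)/2$ if $r \equiv 3 \pmod 4$. Suppose $m_1, m_2, m_3, m_4 \in I_r$ are such that the 6-tuple $(n_r, m_1, m_2, n_r, m_3, m_4)$ is $r$-admissible. Then $m_1 + m_2 + m_3 + m_4$ is even and the square of the quantum 6j-symbol satisfies $\left|\begin{smallmatrix} n_r & m_1 & m_2 \\ n_r & m_3 & m_4 \end{smallmatrix}\right|^2 \geq 0$ as a real number. -/

import Mathlib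

open scoped Real
open Complex Finset

noncomputable section

/-- The quantum integer `[n]` at `q = exp(2πi/r)`. -/
def qint (r : ℕ) (n : ℤ) : ℂ :=
  (Complex.exp (2 * Real.pi * Complex.I / r) ^ n -
    Complex.exp (2 * Real.pi * Complex.I / r) ^ (-n)) /
  (Complex.exp (2 * Real.pi * Complex.I / r) -
    (Complex.exp (2 * Real.pi * Complex.I / r))⁻¹)

/-- The quantum factorial `[N]! = ∏_{k=1}^N [k]`, with `[0]! = 1`. -/
def qfact (r N : ℕ) : ℂ := ∏ k ∈ Finset.Icc 1 N, qint r (k : ℤ)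

/-- A triple `(a₁,a₂,a₃)` of elements of `I_r = {0,…,r-2}` is `r`-admissible. -/
def AdmissibleTriple (r a₁ a₂ a₃ : ℕ) : Prop :=
  a₁ ≤ r - 2 ∧ a₂ ≤ r - 2 ∧ a₃ ≤ r - 2 ∧
  Even (a₁ + a₂ + a₃) ∧
  a₁ + a₂ + a₃ ≤ 2 * (r - 2) ∧
  a₃ ≤ a₁ + a₂ ∧ a₂ ≤ a₁ + a₃ ∧ a₁ ≤ a₂ + a₃

/-- A 6-tuple `(a₁,…,a₆)` is `r`-admissible. -/
def Admissible6 (r a₁ a₂ a₃ a₄ a₅ a₆ : ℕ) : Prop :=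
  AdmissibleTriple r a₁ a₂ a₃ ∧ AdmissibleTriple r a₁ a₅ a₆ ∧
  AdmissibleTriple r a₂ a₄ a₆ ∧ AdmissibleTriple r a₃ a₄ a₅

/-- `Δ(a₁,a₂,a₃)`, using the principal complex square root, which realizes the
convention `√y = i√|y|` for negative real `y`. -/
def qdelta (r a₁ a₂ a₃ : ℕ) : ℂ :=
  (qfact r ((a₁ + a₂ - a₃) / 2) * qfact r ((a₁ + a₃ - a₂) / 2) *
      qfact r ((a₂ + a₃ - a₁) / 2) / qfact r ((a₁ + a₂ + a₃) / 2 + 1)) ^ (1 / 2 : ℂ)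

/-- The quantum 6j-symbol `|a₁ a₂ a₃; a₄ a₅ a₆|` at `q = exp(2πi/r)`. -/
def sixj (r a₁ a₂ a₃ a₄ a₅ a₆ : ℕ) : ℂ :=
  Complex.I ^ (-(a₁ + a₂ + a₃ + a₄ + a₅ + a₆ : ℤ)) *
    qdelta r a₁ a₂ a₃ * qdelta r a₁ a₅ a₆ * qdelta r a₂ a₄ a₆ * qdelta r a₃ a₄ a₅ *
    ∑ k ∈ Finset.Icc
        (max (max ((a₁ + a₂ + a₃) / 2) ((a₁ + a₅ + a₆) / 2))
             (max ((a₂ + a₄ + a₆) / 2) ((a₃ + a₄ + a₅) / 2)))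
        (min ((a₁ + a₂ + a₄ + a₅) / 2)
             (min ((a₁ + a₃ + a₄ + a₆) / 2) ((a₂ + a₃ + a₅ + a₆) / 2))),
      ((-1 : ℂ) ^ k * qfact r (k + 1)) /
        (qfact r (k - (a₁ + a₂ + a₃) / 2) * qfact r (k - (a₁ + a₅ + a₆) / 2) *
         qfact r (k - (a₂ + a₄ + a₆) / 2) * qfact r (k - (a₃ + a₄ + a₅) / 2) *
         qfact r ((a₁ + a₂ + a₄ + a₅) / 2 - k) * qfact r ((a₁ + a₃ + a₄ + a₆) / 2 - k) *
         qfact r ((a₂ + a₃ + a₅ + a₆) / 2 - k))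

/-- `n_r = (r-1)/2` if `r ≡ 1 mod 4`, and `n_r = (r-3)/2` if `r ≡ 3 mod 4`. -/
def nr (r : ℕ) : ℕ := if r % 4 = 1 then (r - 1) / 2 else (r - 3) / 2


/-!
All quantum integers at `q = exp(2πi/r)` are real: `[k] = sin(2πk/r) / sin(2π/r)`. For odd `r`
this is positive for `1 ≤ k ≤ r/2`, negative for `r/2 < k < r` and zero at `k = r`, so `[N]!` has
the sign of `(-1)^(N - r/2)` or vanishes. Since `r/2 - 1 ≤ n_r ≤ r/2`, admissibility keeps the
three factorials in the numerator of each `Δ²` in the positive range, so `Δ²` has the sign of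
`(-1)^(T + 1 - r/2)`, and the four exponents add up to an even number. The sum in the 6j-symbol is
real and the prefactor `(√-1)^{-(a₁+⋯+a₆)}` squares to `1`, so the squared 6j-symbol is the
nonnegative product of the four `Δ²` times the square of a real number.
-/

open ComplexConjugate

def qintReal (r : ℕ) (k : ℤ) : ℝ := Real.sin (k * (2 * π / r)) / Real.sin (2 * π / r)

def qfactReal (r N : ℕ) : ℝ := ∏ k ∈ Icc 1 N, qintReal r k

def qdeltaSqReal (r a b c : ℕ) : ℝ :=
  qfactReal r ((a + b - c) / 2) * qfactReal r ((a + c - b) / 2) * qfactReal r ((b + c - a) / 2) /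
    qfactReal r ((a + b + c) / 2 + 1)

theorem exp_mul_I_zpow_sub_zpow_neg (θ : ℝ) (n : ℤ) :
    exp (θ * I) ^ n - exp (θ * I) ^ (-n) = 2 * I * Real.sin (n * θ) := by
  rw [← exp_int_mul, ← exp_int_mul, ← mul_assoc, ← mul_assoc, exp_mul_I, exp_mul_I]
  push_cast
  rw [neg_mul, cos_neg, sin_neg]
  ring

theorem qint_eq_ofReal (r : ℕ) (k : ℤ) : qint r k = qintReal r k := by
  have hθ : 2 * π * I / r = ↑(2 * π / r) * I := by push_cast; ring
  have hden (z : ℂ) : z - z⁻¹ = z ^ (1 : ℤ) - z ^ (-1 : ℤ) := by simp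
  rw [qint, hθ, hden, exp_mul_I_zpow_sub_zpow_neg, exp_mul_I_zpow_sub_zpow_neg,
    mul_div_mul_left _ _ (by simp), qintReal, Int.cast_one, one_mul, ofReal_div]

theorem qfact_eq_ofReal (r N : ℕ) : qfact r N = qfactReal r N := by
  simp only [qfact, qfactReal, qint_eq_ofReal, ofReal_prod]

theorem conj_qfact (r N : ℕ) : conj (qfact r N) = qfact r N := by
  rw [qfact_eq_ofReal, conj_ofReal]

theorem qdelta_sq (r a b c : ℕ) : qdelta r a b c ^ 2 = qdeltaSqReal r a b c := by
  rw [qdelta, one_div, cpow_ofNat_inv_pow, qdeltaSqReal]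
  simp only [qfact_eq_ofReal, ofReal_mul, ofReal_div]

section Sign

variable {r k : ℕ}

theorem sin_nat_mul_two_pi_div_pos (hk : 0 < k) (hkr : 2 * k < r) :
    0 < Real.sin (k * (2 * π / r)) := by
  have hr : (0 : ℝ) < r := by norm_cast; omega
  have hkr' : (2 * k : ℝ) < r := by exact_mod_cast hkr
  apply Real.sin_pos_of_pos_of_lt_pi (by positivity)
  rw [mul_div_assoc', div_lt_iff₀ hr]
  nlinarith [Real.pi_pos]

theorem sin_nat_mul_two_pi_div_neg (hk : r < 2 * k) (hkr : k < r) :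
    Real.sin (k * (2 * π / r)) < 0 := by
  have hr : (0 : ℝ) < r := by norm_cast; omega
  have hk' : (r : ℝ) < 2 * k := by exact_mod_cast hk
  have hkr' : (k : ℝ) < r := by exact_mod_cast hkr
  rw [← Real.sin_sub_two_pi]
  apply Real.sin_neg_of_neg_of_neg_pi_lt
  · rw [sub_neg, mul_div_assoc', div_lt_iff₀ hr]
    nlinarith [Real.pi_pos]
  · rw [lt_sub_iff_add_lt, mul_div_assoc', lt_div_iff₀ hr]
    nlinarith [Real.pi_pos]

theorem qintReal_pos (hk : 0 < k) (hkr : 2 * k < r) : 0 < qintReal r k := by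
  rw [qintReal, Int.cast_natCast]
  exact div_pos (sin_nat_mul_two_pi_div_pos hk hkr)
    (by simpa using sin_nat_mul_two_pi_div_pos (k := 1) one_pos (by omega))

theorem qintReal_neg (hk : r < 2 * k) (hkr : k < r) : qintReal r k < 0 := by
  rw [qintReal, Int.cast_natCast]
  exact div_neg_of_neg_of_pos (sin_nat_mul_two_pi_div_neg hk hkr)
    (by simpa using sin_nat_mul_two_pi_div_pos (k := 1) one_pos (by omega))

theorem qintReal_self (hr : r ≠ 0) : qintReal r r = 0 := by
  rw [qintReal, Int.cast_natCast, mul_div_cancel₀ _ (by exact_mod_cast hr), Real.sin_two_pi,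
    zero_div]

theorem qfactReal_succ (N : ℕ) : qfactReal r (N + 1) = qfactReal r N * qintReal r (N + 1 : ℕ) :=
  prod_Icc_succ_top (by omega) _

theorem qfactReal_pos {N : ℕ} (hN : 2 * N < r) : 0 < qfactReal r N :=
  prod_pos fun k hk => qintReal_pos (by simp at hk; omega) (by simp at hk; omega)

theorem qfactReal_eq_zero {N : ℕ} (hr : r ≠ 0) (hN : r ≤ N) : qfactReal r N = 0 :=
  prod_eq_zero (i := r) (by simp; omega) (qintReal_self hr)

theorem neg_one_pow_mul_qfactReal_nonneg (hodd : Odd r) (N : ℕ) :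
    0 ≤ (-1 : ℝ) ^ (N - r / 2) * qfactReal r N := by
  have hr : r ≠ 0 := by rintro rfl; simp at hodd
  induction N with
  | zero => simp [qfactReal]
  | succ M ih =>
    rcases lt_or_ge (2 * (M + 1)) r with hsmall | hlarge
    · rw [Nat.sub_eq_zero_of_le (by omega), pow_zero, one_mul]
      exact (qfactReal_pos hsmall).le
    rcases lt_or_ge (M + 1) r with hlt | hge
    · have hodd' : r < 2 * (M + 1) := by obtain ⟨j, rfl⟩ := hodd; omega
      calc (0 : ℝ) ≤ ((-1) ^ (M - r / 2) * qfactReal r M) * -qintReal r (M + 1 : ℕ) :=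
            mul_nonneg ih (neg_nonneg.2 (qintReal_neg hodd' hlt).le)
        _ = (-1) ^ (M + 1 - r / 2) * qfactReal r (M + 1) := by
            rw [Nat.sub_add_comm (by omega), pow_succ, qfactReal_succ]
            ring
    · rw [qfactReal_eq_zero hr hge, mul_zero]

theorem neg_one_pow_mul_div {K : Type*} [Field K] (n : ℕ) (x y : K) :
    (-1) ^ n * (x / y) = x / ((-1) ^ n * y) := by
  rcases neg_one_pow_eq_or K n with h | h <;> simp [h, div_neg]

theorem neg_one_pow_mul_qdeltaSqReal_nonneg (hodd : Odd r) (a b c : ℕ) (hab : a + b - c < r)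
    (hac : a + c - b < r) (hbc : b + c - a < r) :
    0 ≤ (-1 : ℝ) ^ ((a + b + c) / 2 + 1 - r / 2) * qdeltaSqReal r a b c := by
  rw [qdeltaSqReal, neg_one_pow_mul_div]
  refine div_nonneg (mul_nonneg (mul_nonneg ?_ ?_) ?_) (neg_one_pow_mul_qfactReal_nonneg hodd _)
  all_goals exact (qfactReal_pos (by omega)).le

end Sign

theorem neg_one_pow_add_mul_mul_nonneg {R : Type*} [CommRing R] [PartialOrder R] [IsOrderedRing R]
    {m n : ℕ} {x y : R} (hx : 0 ≤ (-1) ^ m * x) (hy : 0 ≤ (-1) ^ n * y) :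
    0 ≤ (-1) ^ (m + n) * (x * y) := by
  rw [pow_add, mul_mul_mul_comm]
  exact mul_nonneg hx hy

theorem I_zpow_sq {e : ℤ} (he : Even e) : (I ^ e) ^ 2 = 1 := by
  rw [← zpow_natCast, ← zpow_mul, mul_comm, zpow_mul, Nat.cast_ofNat, zpow_ofNat, I_sq,
    he.neg_one_zpow]

theorem exists_sixj_sq_eq (r a₁ a₂ a₃ a₄ a₅ a₆ : ℕ)
    (he : Even (a₁ + a₂ + a₃ + a₄ + a₅ + a₆)) :
    ∃ S : ℝ, sixj r a₁ a₂ a₃ a₄ a₅ a₆ ^ 2 =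
      ↑(qdeltaSqReal r a₁ a₂ a₃ * qdeltaSqReal r a₁ a₅ a₆ * qdeltaSqReal r a₂ a₄ a₆ *
        qdeltaSqReal r a₃ a₄ a₅ * S ^ 2) := by
  obtain ⟨S, hS, hsixj⟩ : ∃ S : ℂ, conj S = S ∧ sixj r a₁ a₂ a₃ a₄ a₅ a₆ =
      I ^ (-(a₁ + a₂ + a₃ + a₄ + a₅ + a₆ : ℤ)) * qdelta r a₁ a₂ a₃ * qdelta r a₁ a₅ a₆ *
        qdelta r a₂ a₄ a₆ * qdelta r a₃ a₄ a₅ * S :=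
    ⟨_, by simp only [map_sum, map_div₀, map_mul, map_pow, map_neg, map_one, conj_qfact], rfl⟩
  obtain ⟨S, rfl⟩ := conj_eq_iff_real.mp hS
  refine ⟨S, ?_⟩
  have hI : (I ^ (-(a₁ + a₂ + a₃ + a₄ + a₅ + a₆ : ℤ))) ^ 2 = 1 :=
    I_zpow_sq (Even.neg (by exact_mod_cast he))
  simp only [hsixj, mul_pow, hI, qdelta_sq, one_mul, ofReal_mul, ofReal_pow]

theorem nr_bounds {r : ℕ} (hodd : Odd r) : 2 * nr r < r ∧ r ≤ 2 * nr r + 3 := by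
  obtain ⟨j, rfl⟩ := hodd
  unfold nr
  split_ifs <;> omega

theorem sixj_sq_nonneg_general (r : ℕ) (hodd : Odd r) (m₁ m₂ m₃ m₄ : ℕ)
    (hadm : Admissible6 r (nr r) m₁ m₂ (nr r) m₃ m₄) :
    Even (m₁ + m₂ + m₃ + m₄) ∧
    (sixj r (nr r) m₁ m₂ (nr r) m₃ m₄ ^ 2).im = 0 ∧
    0 ≤ (sixj r (nr r) m₁ m₂ (nr r) m₃ m₄ ^ 2).re := by
  obtain ⟨hn_lt, hn_ge⟩ := nr_bounds hodd
  obtain ⟨⟨-, -, -, he₁, hs₁, ht₁⟩, ⟨-, -, -, he₂, hs₂, ht₂⟩, ⟨-, -, -, he₃, hs₃, ht₃⟩,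
    ⟨-, -, -, he₄, hs₄, ht₄⟩⟩ := hadm
  simp only [Nat.even_iff] at he₁ he₂ he₃ he₄ ⊢
  obtain ⟨S, hS⟩ :=
    exists_sixj_sq_eq r (nr r) m₁ m₂ (nr r) m₃ m₄ (by rw [Nat.even_iff]; omega)
  have hΔ := neg_one_pow_add_mul_mul_nonneg (neg_one_pow_add_mul_mul_nonneg
    (neg_one_pow_add_mul_mul_nonneg
      (neg_one_pow_mul_qdeltaSqReal_nonneg hodd (nr r) m₁ m₂ (by omega) (by omega) (by omega))
      (neg_one_pow_mul_qdeltaSqReal_nonneg hodd (nr r) m₃ m₄ (by omega) (by omega) (by omega)))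
      (neg_one_pow_mul_qdeltaSqReal_nonneg hodd m₁ (nr r) m₄ (by omega) (by omega) (by omega)))
      (neg_one_pow_mul_qdeltaSqReal_nonneg hodd m₂ (nr r) m₃ (by omega) (by omega) (by omega))
  -- No exponent `T + 1 - r / 2` is truncated, as `T ≥ n_r ≥ r / 2 - 1`; the four `T` add up to
  -- `2 n_r + m₁ + m₂ + m₃ + m₄`.
  rw [Even.neg_one_pow (by rw [Nat.even_iff]; omega), one_mul] at hΔ
  refine ⟨by omega, ?_, ?_⟩ <;> rw [hS]
  · exact ofReal_im _
  · rw [ofReal_re]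
    exact mul_nonneg hΔ (sq_nonneg S)

theorem sixj_sq_nonneg (r : ℕ) (hr : 3 ≤ r) (hodd : Odd r) (m₁ m₂ m₃ m₄ : ℕ)
    (hadm : Admissible6 r (nr r) m₁ m₂ (nr r) m₃ m₄) :
    Even (m₁ + m₂ + m₃ + m₄) ∧
    (sixj r (nr r) m₁ m₂ (nr r) m₃ m₄ ^ 2).im = 0 ∧
    0 ≤ (sixj r (nr r) m₁ m₂ (nr r) m₃ m₄ ^ 2).re :=
  sixj_sq_nonneg_general r hodd m₁ m₂ m₃ m₄ hadm
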